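/- For any conservative paging strategy X, any request sequence r, and any k: m(k,r) ≤ 2k · cost_OPT(k,r) / cost_X(k,r). -/

import Mathlib

/-!
Cut `r` into its `k`-phases `P₀, …, P_L`. A conservative schedule faults at most `k` times
inside each phase, so `cost_X ≤ k·L`. Every phase except the last holds exactly `k` distinct
items, so any schedule, whatever its cache at the start of `Pᵢ₋₁`, must fault on each new
item of `Pᵢ` somewhere in `Pᵢ₋₁ Pᵢ`. Summing over consecutive pairs counts each fault at most
twice; starting from the empty cache, the first phase and the first pair each force `k` more
faults, so `m·L + 2k ≤ 2·faults`, i.e. `m·L ≤ 2·cost_OPT`. Dividing the two bounds yields the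
claim.
-/

/-- Length of the maximal prefix of `r` containing at most `k` distinct items. -/
def maxPrefixLen {α : Type*} [DecidableEq α] (k : ℕ) (r : List α) : ℕ :=
  ((List.range (r.length + 1)).filter (fun n => (r.take n).dedup.length ≤ k)).foldr max 0

/-- Greedy phase partition, with fuel for termination. -/
def phasesAux {α : Type*} [DecidableEq α] (k : ℕ) : ℕ → List α → List (List α)
  | 0, _ => []
  | _, [] => []
  | (fuel+1), r =>
      let n := max 1 (maxPrefixLen k r)
      r.take n :: phasesAux k fuel (r.drop n)

/-- The `k`-phase partition of `r`: greedy maximal consecutive blocks, each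
containing requests to at most `k` distinct items. -/
def phases {α : Type*} [DecidableEq α] (k : ℕ) (r : List α) : List (List α) :=
  phasesAux k r.length r

/-- `L(k,r)`: the number of `k`-phases of `r`, minus 1. -/
def numPhases {α : Type*} [DecidableEq α] (k : ℕ) (r : List α) : ℕ :=
  (phases k r).length - 1

/-- For each `k`-phase other than the first, the number of new requests:
items requested in the phase but not in the previous phase. -/
def newCounts {α : Type*} [DecidableEq α] (k : ℕ) (r : List α) : List ℕ :=
  ((phases k r).zip (phases k r).tail).map
    (fun p => (p.2.dedup.filter (fun x => x ∉ p.1)).length)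

/-- `m(k,r)`: the average number of new requests per `k`-phase (other than the first). -/
noncomputable def avgNew {α : Type*} [DecidableEq α] (k : ℕ) (r : List α) : ℝ :=
  ((newCounts k r).sum : ℝ) / (numPhases k r : ℝ)

/-- Index in `r` at which the `i`-th `k`-phase starts. -/
def phaseStart {α : Type*} [DecidableEq α] (k : ℕ) (r : List α) (i : ℕ) : ℕ :=
  (((phases k r).take i).map List.length).sum

/-- An execution of a paging strategy with `h` servers (cache slots) on request
sequence `r`.  `cache i` is the set of items with a server just before request `i`
is served; the cache starts empty, never exceeds `h` items, contains each
requested item right after it is served, and only requested items may enter. -/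
structure PagingSchedule {α : Type*} [DecidableEq α] (h : ℕ) (r : List α) where
  cache : ℕ → Finset α
  init : cache 0 = ∅
  card_le : ∀ i, (cache i).card ≤ h
  serves : ∀ i : Fin r.length, r.get i ∈ cache (i.val + 1)
  update : ∀ i : Fin r.length, cache (i.val + 1) ⊆ cache i.val ∪ {r.get i}

/-- Number of faults: requests to items not currently in the cache. -/
def faults {α : Type*} [DecidableEq α] {h : ℕ} {r : List α} (s : PagingSchedule h r) : ℕ :=
  (Finset.univ.filter (fun i : Fin r.length => r.get i ∉ s.cache i.val)).card

/-- Cost of a schedule: each server's first placement is free, so the number of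
(paid) server movements is the number of faults minus `h`. -/
def schedCost {α : Type*} [DecidableEq α] {h : ℕ} {r : List α} (s : PagingSchedule h r) : ℕ :=
  faults s - h

/-- Optimal offline paging cost with `h` servers on `r`. -/
noncomputable def costOpt {α : Type*} [DecidableEq α] (h : ℕ) (r : List α) : ℕ :=
  sInf {c | ∃ s : PagingSchedule h r, c = schedCost s}

/-- Number of faults incurred at requests with index in `[a, b)`. -/
def windowFaults {α : Type*} [DecidableEq α] {h : ℕ} {r : List α}
    (s : PagingSchedule h r) (a b : ℕ) : ℕ :=
  (Finset.univ.filter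
    (fun i : Fin r.length => a ≤ i.val ∧ i.val < b ∧ r.get i ∉ s.cache i.val)).card

/-- A schedule is conservative if it faults at most `h` times during any
consecutive subsequence of requests to at most `h` distinct items. -/
def Conservative {α : Type*} [DecidableEq α] {h : ℕ} {r : List α}
    (s : PagingSchedule h r) : Prop :=
  ∀ a b : ℕ, ((r.drop a).take (b - a)).dedup.length ≤ h → windowFaults s a b ≤ h


section Phases

variable {α : Type*} [DecidableEq α] {k : ℕ} {r : List α}

lemma maxPrefixLen_mem :
    maxPrefixLen k r ∈
      (List.range (r.length + 1)).filter (fun n => (r.take n).dedup.length ≤ k) := by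
  have h0 : 0 ∈ (List.range (r.length + 1)).filter (fun n => (r.take n).dedup.length ≤ k) := by
    simp
  exact List.maximum_mem (List.foldr_max_of_ne_nil (List.ne_nil_of_mem h0)).symm

lemma dedup_length_take_maxPrefixLen_le : (r.take (maxPrefixLen k r)).dedup.length ≤ k := by
  simpa using (List.mem_filter.mp (maxPrefixLen_mem (k := k) (r := r))).2

lemma le_maxPrefixLen {n : ℕ} (hn : n ≤ r.length) (h : (r.take n).dedup.length ≤ k) :
    n ≤ maxPrefixLen k r :=
  List.le_max_of_le
    (List.mem_filter.mpr ⟨List.mem_range.mpr (by omega), by simpa using h⟩) le_rfl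

lemma one_le_maxPrefixLen (hk : 0 < k) (hr : r ≠ []) : 1 ≤ maxPrefixLen k r := by
  obtain ⟨x, t, rfl⟩ := List.exists_cons_of_ne_nil hr
  exact le_maxPrefixLen (by simp) (by simpa using Nat.one_le_iff_ne_zero.mpr hk.ne')

lemma dedup_length_take_add_one_le (n : ℕ) :
    (r.take (n + 1)).dedup.length ≤ (r.take n).dedup.length + 1 := by
  rw [← List.card_toFinset, ← List.card_toFinset, List.take_add_one, List.toFinset_append]
  refine (Finset.card_union_le _ _).trans (Nat.add_le_add_left ?_ _)
  cases r[n]? <;> simp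

lemma le_dedup_length_take_maxPrefixLen (hlt : maxPrefixLen k r < r.length) :
    k ≤ (r.take (maxPrefixLen k r)).dedup.length := by
  by_contra! h
  have := le_maxPrefixLen (k := k) (n := maxPrefixLen k r + 1) hlt
    ((dedup_length_take_add_one_le _).trans h)
  omega

lemma phasesAux_nil (fuel : ℕ) : phasesAux (α := α) k fuel [] = [] := by
  cases fuel <;> rfl

lemma phasesAux_succ (hk : 0 < k) (hr : r ≠ []) (fuel : ℕ) :
    phasesAux k (fuel + 1) r =
      r.take (maxPrefixLen k r) :: phasesAux k fuel (r.drop (maxPrefixLen k r)) := by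
  obtain ⟨x, t, rfl⟩ := List.exists_cons_of_ne_nil hr
  simp only [phasesAux, max_eq_right (one_le_maxPrefixLen hk hr)]

lemma flatten_phasesAux (hk : 0 < k) (fuel : ℕ) (r : List α) (hr : r.length ≤ fuel) :
    (phasesAux k fuel r).flatten = r := by
  induction fuel generalizing r with
  | zero => simp_all [phasesAux_nil]
  | succ fuel ih =>
    rcases eq_or_ne r [] with rfl | hne
    · simp [phasesAux_nil]
    have := one_le_maxPrefixLen hk hne
    rw [phasesAux_succ hk hne, List.flatten_cons, ih _ (by simp; omega), List.take_append_drop]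

lemma dedup_length_le_of_mem_phasesAux (hk : 0 < k) {p : List α} (fuel : ℕ) (r : List α)
    (hp : p ∈ phasesAux k fuel r) : p.dedup.length ≤ k := by
  induction fuel generalizing r with
  | zero => cases r <;> simp [phasesAux] at hp
  | succ fuel ih =>
    rcases eq_or_ne r [] with rfl | hne
    · simp [phasesAux_nil] at hp
    rw [phasesAux_succ hk hne, List.mem_cons] at hp
    rcases hp with rfl | hp
    · exact dedup_length_take_maxPrefixLen_le
    · exact ih _ hp

lemma le_dedup_length_of_mem_dropLast_phasesAux (hk : 0 < k) {p : List α} (fuel : ℕ)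
    (r : List α) (hp : p ∈ (phasesAux k fuel r).dropLast) : k ≤ p.dedup.length := by
  induction fuel generalizing r with
  | zero => cases r <;> simp [phasesAux] at hp
  | succ fuel ih =>
    rcases eq_or_ne r [] with rfl | hne
    · simp [phasesAux_nil] at hp
    rw [phasesAux_succ hk hne] at hp
    set rest := phasesAux k fuel (r.drop (maxPrefixLen k r))
    rcases eq_or_ne rest [] with hrest | hrest
    · simp [hrest] at hp
    rw [List.dropLast_cons_of_ne_nil hrest, List.mem_cons] at hp
    rcases hp with rfl | hp
    · refine le_dedup_length_take_maxPrefixLen (lt_of_not_ge fun hle => hrest ?_)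
      simp [rest, List.drop_eq_nil_of_le hle, phasesAux_nil]
    · exact ih _ hp

lemma flatten_phases (hk : 0 < k) (r : List α) : (phases k r).flatten = r :=
  flatten_phasesAux hk _ r le_rfl

lemma dedup_length_le_of_mem_phases (hk : 0 < k) {p : List α} (hp : p ∈ phases k r) :
    p.dedup.length ≤ k :=
  dedup_length_le_of_mem_phasesAux hk _ r hp

lemma le_dedup_length_of_mem_dropLast_phases (hk : 0 < k) {p : List α}
    (hp : p ∈ (phases k r).dropLast) : k ≤ p.dedup.length :=
  le_dedup_length_of_mem_dropLast_phasesAux hk _ r hp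

end Phases

section Schedules

variable {α : Type*} [DecidableEq α] {h : ℕ} {r : List α} (s : PagingSchedule h r)

lemma windowFaults_add {a b c : ℕ} (hab : a ≤ b) (hbc : b ≤ c) :
    windowFaults s a c = windowFaults s a b + windowFaults s b c := by
  rw [windowFaults, windowFaults, windowFaults, ← Finset.card_union_of_disjoint]
  · congr 1
    ext i
    simp only [Finset.mem_union, Finset.mem_filter, Finset.mem_univ, true_and]
    constructor
    · rintro ⟨h1, h2, h3⟩
      by_cases hib : i.val < b
      exacts [Or.inl ⟨h1, hib, h3⟩, Or.inr ⟨by omega, h2, h3⟩]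
    · rintro (⟨h1, h2, h3⟩ | ⟨h1, h2, h3⟩)
      exacts [⟨h1, by omega, h3⟩, ⟨by omega, h2, h3⟩]
  · rw [Finset.disjoint_left]
    intro i hi hi'
    simp only [Finset.mem_filter, Finset.mem_univ, true_and] at hi hi'
    omega

@[simp]
lemma windowFaults_self (a : ℕ) : windowFaults s a a = 0 := by
  simp only [windowFaults, Finset.card_eq_zero, Finset.filter_eq_empty_iff]
  intro i _ ⟨h1, h2, _⟩
  omega

lemma faults_eq_windowFaults : faults s = windowFaults s 0 r.length := by
  rw [faults, windowFaults]
  congr 1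
  ext i
  simp

lemma exists_fault_of_mem_cache {x : α} {a i : ℕ} (hxa : x ∉ s.cache a) (hai : a ≤ i)
    (hi : i < r.length) (hx : x ∈ s.cache (i + 1)) :
    ∃ j : Fin r.length, a ≤ j.val ∧ j.val ≤ i ∧ r.get j = x ∧ x ∉ s.cache j.val := by
  induction i, hai using Nat.le_induction with
  | base =>
    have hxr : x = r.get ⟨a, hi⟩ := by simpa [hxa] using s.update ⟨a, hi⟩ hx
    exact ⟨⟨a, hi⟩, le_rfl, le_rfl, hxr.symm, hxa⟩
  | succ i hai ih =>
    by_cases hxi : x ∈ s.cache (i + 1)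
    · obtain ⟨j, h1, h2, h3, h4⟩ := ih (by omega) hxi
      exact ⟨j, h1, by omega, h3, h4⟩
    · have hxr : x = r.get ⟨i + 1, hi⟩ := by simpa [hxi] using s.update ⟨i + 1, hi⟩ hx
      exact ⟨⟨i + 1, hi⟩, Nat.le_succ_of_le hai, le_rfl, hxr.symm, hxi⟩

lemma card_toFinset_window_le (a b : ℕ) :
    ((r.drop a).take (b - a)).toFinset.card ≤ windowFaults s a b + (s.cache a).card := by
  set w := (r.drop a).take (b - a)
  let windowFaultSet := Finset.univ.filter
    (fun i : Fin r.length => a ≤ i.val ∧ i.val < b ∧ r.get i ∉ s.cache i.val)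
  have hsurj : Set.SurjOn r.get windowFaultSet (w.toFinset \ s.cache a : Finset α) := by
    intro x hx
    simp only [Finset.coe_sdiff, Set.mem_sdiff, Finset.mem_coe, List.mem_toFinset] at hx
    obtain ⟨hxw, hxa⟩ := hx
    obtain ⟨i, hi, rfl⟩ := List.mem_iff_getElem.mp hxw
    have hiw : i < b - a ∧ a + i < r.length := by
      simp only [w, List.length_take, List.length_drop] at hi
      omega
    have hget : w[i] = r.get ⟨a + i, hiw.2⟩ := by simp [w]
    rw [hget] at hxa ⊢
    obtain ⟨j, h1, h2, h3, h4⟩ :=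
      exists_fault_of_mem_cache s hxa (Nat.le_add_right a i) hiw.2 (s.serves ⟨a + i, hiw.2⟩)
    exact ⟨j, Finset.mem_filter.mpr ⟨Finset.mem_univ _, h1, by omega, h3 ▸ h4⟩, h3⟩
  have := Finset.card_le_card_of_surjOn _ hsurj
  have := Finset.card_le_card_sdiff_add_card (s := w.toFinset) (t := s.cache a)
  change w.toFinset.card ≤ windowFaultSet.card + (s.cache a).card
  omega

end Schedules

section Bounds

variable {α : Type*} [DecidableEq α] {h : ℕ} {r : List α} (s : PagingSchedule h r)

lemma windowFaults_le_of_conservative (hcons : Conservative s) {a : ℕ} {p t : List α}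
    (ht : r.drop a = p ++ t) (hp : p.dedup.length ≤ h) :
    windowFaults s a (a + p.length) ≤ h :=
  hcons a _ (by rwa [Nat.add_sub_cancel_left, ht, List.take_left])

lemma card_toFinset_le_windowFaults {a : ℕ} {p t : List α} (ht : r.drop a = p ++ t) :
    p.toFinset.card ≤ windowFaults s a (a + p.length) + (s.cache a).card := by
  simpa [ht] using card_toFinset_window_le s a (a + p.length)

lemma windowFaults_flatten_le (hcons : Conservative s) {t : List α} (P : List (List α))
    (hP : ∀ p ∈ P, p.dedup.length ≤ h) (a : ℕ) (ht : r.drop a = P.flatten ++ t) :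
    windowFaults s a (a + P.flatten.length) ≤ h * P.length := by
  induction P generalizing a with
  | nil => simp
  | cons p P ih =>
    rw [List.flatten_cons, List.append_assoc] at ht
    have htail : r.drop (a + p.length) = P.flatten ++ t := by
      rw [← List.drop_drop, ht, List.drop_left]
    have hp := windowFaults_le_of_conservative s hcons ht (hP p List.mem_cons_self)
    have hrest := ih (fun q hq => hP q (List.mem_cons_of_mem p hq)) _ htail
    rw [List.flatten_cons, List.length_append, ← add_assoc,
      windowFaults_add s (Nat.le_add_right a _) (Nat.le_add_right _ _), List.length_cons,
      Nat.mul_succ]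
    omega

lemma schedCost_le_of_conservative (hcons : Conservative s) (P : List (List α))
    (hr : P.flatten = r) (hP : ∀ p ∈ P, p.dedup.length ≤ h) :
    schedCost s ≤ h * (P.length - 1) := by
  have := windowFaults_flatten_le s hcons (t := []) P hP 0 (by simp [hr])
  rw [Nat.zero_add, hr, ← faults_eq_windowFaults] at this
  rw [schedCost, Nat.mul_sub_one]
  omega

def newItems (p q : List α) : ℕ :=
  (q.dedup.filter (fun x => x ∉ p)).length

def totalNew (P : List (List α)) : ℕ :=
  ((P.zip P.tail).map fun x => newItems x.1 x.2).sum

lemma sum_newCounts_eq_totalNew (k : ℕ) :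
    (newCounts k r).sum = totalNew (phases k r) :=
  rfl

lemma totalNew_cons_cons (p q : List α) (P : List (List α)) :
    totalNew (p :: q :: P) = newItems p q + totalNew (q :: P) := by
  simp [totalNew]

lemma card_toFinset_append (p q : List α) :
    (p ++ q).toFinset.card = p.toFinset.card + newItems p q := by
  have hnew : newItems p q = (q.toFinset \ p.toFinset).card := by
    rw [newItems, ← List.toFinset_card_of_nodup (q.nodup_dedup.filter _)]
    congr 1
    ext x
    simp
  rw [hnew, List.toFinset_append, Finset.union_comm, ← Finset.card_sdiff_add_card, add_comm]

/-- The window `p ++ q` holds `p.dedup.length + newItems p q` distinct items, and at most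
`h ≤ p.dedup.length` of them can be cached when it starts. -/
lemma newItems_le_windowFaults {a : ℕ} {p q t : List α} (ht : r.drop a = p ++ q ++ t)
    (hp : h ≤ p.dedup.length) :
    newItems p q ≤ windowFaults s a (a + p.length + q.length) := by
  have := card_toFinset_le_windowFaults s (p := p ++ q) ht
  rw [card_toFinset_append, List.card_toFinset, List.length_append, ← add_assoc] at this
  have := s.card_le a
  omega

/-- Each block lies in the windows of at most two consecutive pairs, hence the factor `2`. -/
lemma totalNew_add_windowFaults_le {t : List α} (P : List (List α)) (p : List α) (a : ℕ)
    (ht : r.drop a = (p :: P).flatten ++ t)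
    (hP : ∀ x ∈ (p :: P).dropLast, h ≤ x.dedup.length) :
    totalNew (p :: P) + windowFaults s a (a + p.length) ≤
      2 * windowFaults s a (a + (p :: P).flatten.length) := by
  induction P generalizing p a with
  | nil => simp [totalNew]; omega
  | cons q P ih =>
    rw [List.dropLast_cons_cons] at hP
    rw [List.flatten_cons, List.flatten_cons, ← List.append_assoc, List.append_assoc] at ht
    have hpq := newItems_le_windowFaults s ht (hP p List.mem_cons_self)
    have htail : r.drop (a + p.length) = (q :: P).flatten ++ t := by
      rw [← List.drop_drop, ht, List.append_assoc, List.drop_left, List.flatten_cons,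
        List.append_assoc]
    have hrest := ih q (a + p.length) htail (fun x hx => hP x (List.mem_cons_of_mem p hx))
    have hlen : (p :: q :: P).flatten.length = p.length + (q :: P).flatten.length := by simp
    rw [totalNew_cons_cons, hlen, ← add_assoc,
      windowFaults_add s (Nat.le_add_right a _) (Nat.le_add_right _ _)]
    rw [windowFaults_add s (Nat.le_add_right a _) (Nat.le_add_right _ _)] at hpq
    omega

lemma totalNew_add_two_mul_le_two_mul_faults (P : List (List α)) (hr : P.flatten = r)
    (hP : ∀ x ∈ P.dropLast, h ≤ x.dedup.length) (hlen : 2 ≤ P.length) :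
    totalNew P + 2 * h ≤ 2 * faults s := by
  obtain _ | ⟨p, _ | ⟨q, P⟩⟩ := P
  · simp at hlen
  · simp at hlen
  have hp := hP p (by simp)
  have ht : r.drop 0 = p ++ q ++ (P.flatten ++ []) := by simp [← hr]
  have hfirst := card_toFinset_le_windowFaults s (p := p) (by rw [ht, List.append_assoc])
  have hpair := card_toFinset_le_windowFaults s (p := p ++ q) ht
  rw [card_toFinset_append, List.length_append, s.init, Finset.card_empty, Nat.zero_add,
    windowFaults_add s (Nat.zero_le p.length) (Nat.le_add_right _ q.length)] at hpair
  have hrest := totalNew_add_windowFaults_le s P q p.length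
    (by rw [← hr, List.flatten_cons, List.drop_left, List.append_nil])
    (fun x hx => hP x (by rw [List.dropLast_cons_cons]; exact List.mem_cons_of_mem p hx))
  rw [s.init, Finset.card_empty, Nat.zero_add] at hfirst
  rw [List.card_toFinset] at hfirst hpair
  have hlenr : r.length = p.length + (q :: P).flatten.length := by simp [← hr]
  rw [faults_eq_windowFaults, hlenr, windowFaults_add s (Nat.zero_le p.length) (by omega),
    totalNew_cons_cons]
  omega

end Bounds

section OptimalCost

variable {α : Type*} [DecidableEq α] {h : ℕ} {r : List α}

lemma exists_schedCost_eq_costOpt (s : PagingSchedule h r) :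
    ∃ s₀ : PagingSchedule h r, schedCost s₀ = costOpt h r := by
  obtain ⟨s₀, hs₀⟩ := Nat.sInf_mem (s := {c | ∃ s : PagingSchedule h r, c = schedCost s})
    ⟨_, s, rfl⟩
  exact ⟨s₀, hs₀.symm⟩

lemma totalNew_le_two_mul_costOpt (s : PagingSchedule h r) (P : List (List α))
    (hr : P.flatten = r) (hP : ∀ x ∈ P.dropLast, h ≤ x.dedup.length) (hlen : 2 ≤ P.length) :
    totalNew P ≤ 2 * costOpt h r := by
  obtain ⟨s₀, hs₀⟩ := exists_schedCost_eq_costOpt s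
  have := totalNew_add_two_mul_le_two_mul_faults s₀ P hr hP hlen
  rw [← hs₀, schedCost]
  omega

end OptimalCost

/-- for any conservative paging strategy `X`,
`m(k,r) ≤ 2k · cost_OPT(k,r) / cost_X(k,r)`. -/
theorem avgNew_le_conservative_ratio {α : Type*} [DecidableEq α] (r : List α)
    (k : ℕ) (hk : 0 < k) (s : PagingSchedule k r) (hcons : Conservative s)
    (hpos : 0 < schedCost s) :
    avgNew k r ≤ 2 * (k : ℝ) * (costOpt k r : ℝ) / (schedCost s : ℝ) := by
  have hflat := flatten_phases hk r
  have hX : schedCost s ≤ k * numPhases k r :=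
    schedCost_le_of_conservative s hcons _ hflat fun _ hp => dedup_length_le_of_mem_phases hk hp
  have hL : 0 < numPhases k r := Nat.pos_of_mul_pos_left (hpos.trans_le hX)
  have hOPT : (newCounts k r).sum ≤ 2 * costOpt k r :=
    sum_newCounts_eq_totalNew (r := r) k ▸ totalNew_le_two_mul_costOpt s _ hflat
      (fun _ hp => le_dedup_length_of_mem_dropLast_phases hk hp) (by unfold numPhases at hL; omega)
  have hLR : (0 : ℝ) < numPhases k r := by exact_mod_cast hL
  have hXR : (0 : ℝ) < schedCost s := by exact_mod_cast hpos
  have hOPTR : ((newCounts k r).sum : ℝ) ≤ 2 * costOpt k r := by exact_mod_cast hOPT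
  have hXR' : (schedCost s : ℝ) ≤ k * numPhases k r := by exact_mod_cast hX
  rw [avgNew, div_le_div_iff₀ hLR hXR]
  calc ((newCounts k r).sum : ℝ) * schedCost s
      ≤ 2 * costOpt k r * (k * numPhases k r) := by gcongr
    _ = 2 * k * costOpt k r * numPhases k r := by ring
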